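/- arXiv:1804.00223 — 3 statements merged into one kernel-verified Lean document; each statement's English description precedes it below -/
import Mathlib

section
/- Density hypothesis transfer: if τ admits a conditional density with respect to the larger filtration 𝔽, i.e. P(τ > s | 𝓕_t) = ∫ₛ^∞ β(t,u) du with β(t,u) 𝓕_t-measurable and β(t,u)1_{{t≥u}} = β(u,u)1_{{t≥u}}, then for any sub-filtration 𝔽̃ ⊆ 𝔽 one has P(τ > s | 𝓕̃_t) = ∫ₛ^∞ β̃(t,u) du with β̃(t,u) := E[β(t,u) | 𝓕̃_t], and β̃ inherits the property β̃(t,u)1_{{t≥u}} = β̃(u,u)1_{{t≥u}} provided the relevant factor in β(u,u) is 𝓕̃-adapted and the remaining factor is independent of 𝓕̃ (as in β(t,u) = E[λ(u,μ_u,Z_u)e^{−∫₀ᵘλ dr}|𝓕_t] with μ adapted to 𝔽̃ and Z independent of 𝔽̃). -/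
open MeasureTheory ProbabilityTheory

/-!
The first claim is the tower property `E[· | F̃_t] = E[E[· | F_t] | F̃_t]` followed by the density
hypothesis and Fubini. For the second, `β(t,u) = β(u,u) = k(u, M_u, Z_u)` for `t ≥ u`, and since
`M_u` is `F̃_t`-measurable while `Z_u` is independent of `F̃_t`, conditioning on `F̃_t` freezes
`M_u`: the result is `∫ k(u, M_u, z) P_{Z_u}(dz)`, the same function for every `t ≥ u`.
-/

section Freezing

variable {Ω α β : Type*} [MeasurableSpace α] [MeasurableSpace β]

theorem integral_comp_eq_integral_integral_of_indepFun {mΩ : MeasurableSpace Ω}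
    {P : Measure Ω} [IsFiniteMeasure P] {X : Ω → α} {Z : Ω → β}
    (hX : Measurable X) (hZ : Measurable Z) (hXZ : IndepFun X Z P)
    {G : Type*} [NormedAddCommGroup G] [NormedSpace ℝ G] {h : α → β → G}
    (hh : StronglyMeasurable (Function.uncurry h))
    (hint : Integrable (fun ω => h (X ω) (Z ω)) P) :
    ∫ ω, h (X ω) (Z ω) ∂P = ∫ ω, ∫ z, h (X ω) z ∂(P.map Z) ∂P := by
  have hmap : P.map (fun ω => (X ω, Z ω)) = (P.map X).prod (P.map Z) :=
    (indepFun_iff_map_prod_eq_prod_map_map hX.aemeasurable hZ.aemeasurable).mp hXZ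
  have hXZmeas : Measurable fun ω => (X ω, Z ω) := hX.prodMk hZ
  have hint_prod : Integrable (Function.uncurry h) ((P.map X).prod (P.map Z)) := by
    rw [← hmap, integrable_map_measure hh.aestronglyMeasurable hXZmeas.aemeasurable]
    exact hint
  have hinner : StronglyMeasurable fun x => ∫ z, h x z ∂(P.map Z) :=
    hh.integral_prod_right'
  calc ∫ ω, h (X ω) (Z ω) ∂P
      = ∫ p, Function.uncurry h p ∂((P.map X).prod (P.map Z)) := by
        rw [← hmap, integral_map hXZmeas.aemeasurable hh.aestronglyMeasurable]
        rfl
    _ = ∫ x, ∫ z, h x z ∂(P.map Z) ∂(P.map X) := integral_prod _ hint_prod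
    _ = ∫ ω, ∫ z, h (X ω) z ∂(P.map Z) ∂P :=
        integral_map hX.aemeasurable hinner.aestronglyMeasurable

theorem condExp_comp_ae_eq_integral_of_indep {m mΩ : MeasurableSpace Ω}
    {P : Measure Ω} [IsProbabilityMeasure P] (hm : m ≤ mΩ)
    {M : Ω → α} (hM : Measurable[m] M) {Z : Ω → β} (hZ : Measurable Z)
    (hindep : Indep (MeasurableSpace.comap Z inferInstance) m P)
    {k : α → β → ℝ} (hk : Measurable (Function.uncurry k)) {C : ℝ} (hC : ∀ x z, ‖k x z‖ ≤ C) :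
    P[fun ω => k (M ω) (Z ω) | m] =ᵐ[P] fun ω => ∫ z, k (M ω) z ∂(P.map Z) := by
  have hMΩ : Measurable M := hM.mono hm le_rfl
  have hint : Integrable (fun ω => k (M ω) (Z ω)) P :=
    (integrable_const C).mono' (hk.comp (hMΩ.prodMk hZ)).aestronglyMeasurable
      (Filter.Eventually.of_forall fun ω => hC (M ω) (Z ω))
  have hg : StronglyMeasurable fun x => ∫ z, k x z ∂(P.map Z) :=
    hk.stronglyMeasurable.integral_prod_right'
  have hgM : StronglyMeasurable[m] fun ω => ∫ z, k (M ω) z ∂(P.map Z) := hg.comp_measurable hM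
  have hgM_int : Integrable (fun ω => ∫ z, k (M ω) z ∂(P.map Z)) P := by
    refine (integrable_const C).mono' (hgM.mono hm).aestronglyMeasurable
      (Filter.Eventually.of_forall fun ω => ?_)
    have : IsProbabilityMeasure (P.map Z) := Measure.isProbabilityMeasure_map hZ.aemeasurable
    simpa using
      norm_integral_le_of_norm_le_const (μ := P.map Z) (Filter.Eventually.of_forall (hC (M ω)))
  refine (ae_eq_condExp_of_forall_setIntegral_eq hm hint (fun s _ _ => hgM_int.integrableOn)
    (fun s hs _ => ?_) hgM.aestronglyMeasurable).symm
  -- `Z` is independent of the `m`-measurable pair `(M, 1_s)`, which carries the restriction to `s`.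
  set X : Ω → α × ℝ := fun ω => (M ω, s.indicator 1 ω)
  have hXm : Measurable[m] X := hM.prodMk (measurable_const.indicator hs)
  have hXZ : IndepFun X Z P :=
    ((IndepFun_iff_Indep X Z P).mpr (indep_of_indep_of_le_right hindep hXm.comap_le).symm)
  have hmul (f : Ω → ℝ) : (fun ω => s.indicator 1 ω * f ω) = s.indicator f := by
    ext ω
    by_cases hω : ω ∈ s <;> simp [hω]
  have key := integral_comp_eq_integral_integral_of_indepFun (hXm.mono hm le_rfl) hZ hXZ
    (h := fun p z => p.2 * k p.1 z)
    ((measurable_snd.comp measurable_fst).mul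
      (hk.comp (measurable_fst.fst.prodMk measurable_snd))).stronglyMeasurable
    (by simpa only [X, hmul] using hint.indicator (hm s hs))
  simp only [X, integral_const_mul] at key
  rwa [hmul, hmul, integral_indicator (hm s hs), integral_indicator (hm s hs), eq_comm] at key

theorem condExp_comp_ae_eq_condExp_of_indep {m₁ m₂ mΩ : MeasurableSpace Ω}
    {P : Measure Ω} [IsProbabilityMeasure P] (hm₁₂ : m₁ ≤ m₂) (hm₂ : m₂ ≤ mΩ)
    {M : Ω → α} (hM : Measurable[m₁] M) {Z : Ω → β} (hZ : Measurable Z)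
    (hindep : Indep (MeasurableSpace.comap Z inferInstance) m₂ P)
    {k : α → β → ℝ} (hk : Measurable (Function.uncurry k)) {C : ℝ} (hC : ∀ x z, ‖k x z‖ ≤ C) :
    P[fun ω => k (M ω) (Z ω) | m₂] =ᵐ[P] P[fun ω => k (M ω) (Z ω) | m₁] :=
  (condExp_comp_ae_eq_integral_of_indep hm₂ (hM.mono hm₁₂ le_rfl) hZ hindep hk hC).trans
    (condExp_comp_ae_eq_integral_of_indep (hm₁₂.trans hm₂) hM hZ
      (indep_of_indep_of_le_right hindep hm₁₂) hk hC).symm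

end Freezing

theorem stmt11_general {Ω E F' : Type*} {mΩ : MeasurableSpace Ω}
    [MeasurableSpace E] [MeasurableSpace F']
    (P : Measure Ω) [IsProbabilityMeasure P]
    (F Ftil : ℝ → MeasurableSpace Ω)
    (hsub : ∀ t, Ftil t ≤ F t) (hFle : ∀ t, F t ≤ mΩ)
    (hFtilmono : ∀ s t : ℝ, s ≤ t → Ftil s ≤ Ftil t)
    (τ : Ω → ℝ) (β : ℝ → ℝ → Ω → ℝ)
    -- the density hypothesis w.r.t. the large filtration:
    (hdens : ∀ s t : ℝ,
      P[Set.indicator {ω | s < τ ω} (fun _ => (1 : ℝ)) | F t]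
        =ᵐ[P] fun ω => ∫ u in Set.Ioi s, β t u ω)
    (hconsist : ∀ u t : ℝ, u ≤ t → β t u =ᵐ[P] β u u)
    -- Fubini for conditional expectation (valid under integrability):
    (hFub : ∀ s t : ℝ,
      P[(fun ω => ∫ u in Set.Ioi s, β t u ω) | Ftil t]
        =ᵐ[P] fun ω => ∫ u in Set.Ioi s, (P[β t u | Ftil t]) ω)
    -- structure of `β(u,u)`: an `F̃_u`-measurable factor and a factor independent of `F̃`:
    (M : ℝ → Ω → E) (hM : ∀ u, Measurable[Ftil u] (M u))
    (Z : ℝ → Ω → F') (hZmeas : ∀ u, Measurable (Z u))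
    (hindep : ∀ u t : ℝ, Indep (MeasurableSpace.comap (Z u) inferInstance) (Ftil t) P)
    (k : ℝ → E → F' → ℝ) (hk : ∀ u, Measurable (Function.uncurry (k u)))
    (Ck : ℝ) (hkbdd : ∀ u x z, |k u x z| ≤ Ck)
    (hβuu : ∀ u ω, β u u ω = k u (M u ω) (Z u ω)) :
    (∀ s t : ℝ,
      P[Set.indicator {ω | s < τ ω} (fun _ => (1 : ℝ)) | Ftil t]
        =ᵐ[P] fun ω => ∫ u in Set.Ioi s, (P[β t u | Ftil t]) ω) ∧
      (∀ u t : ℝ, u ≤ t → P[β t u | Ftil t] =ᵐ[P] P[β u u | Ftil u]) := by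
  refine ⟨fun s t => ?_, fun u t hut => ?_⟩
  · exact (condExp_condExp_of_le (hsub t) (hFle t)).symm.trans
      ((condExp_congr_ae (hdens s t)).trans (hFub s t))
  · have hβuu_eq : β u u = fun ω => k u (M u ω) (Z u ω) := funext (hβuu u)
    refine (condExp_congr_ae (hconsist u t hut)).trans ?_
    rw [hβuu_eq]
    exact condExp_comp_ae_eq_condExp_of_indep (hFtilmono u t hut) ((hsub t).trans (hFle t))
      (hM u) (hZmeas u) (hindep u t) (hk u) (hkbdd u)

/-- transfer of the density hypothesis to a sub-filtration: if `τ` admits a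
conditional density `β` w.r.t. the larger filtration `F` (i.e. `P(τ > s | F_t) = ∫ₛ^∞ β(t,u)du`
with `β(t,u)` being `F_t`-measurable and `β(t,u)1_{t≥u} = β(u,u)1_{t≥u}`), then for the
sub-filtration `F̃ ⊆ F` one has `P(τ > s | F̃_t) = ∫ₛ^∞ β̃(t,u)du` with
`β̃(t,u) := E[β(t,u) | F̃_t]`, and `β̃(t,u) = β̃(u,u)` a.s. for `t ≥ u`, provided
`β(u,u) = k(u, M_u, Z_u)` with `M_u` being `F̃_u`-measurable and `Z_u` independent of `F̃`. -/
theorem stmt11 {Ω E F' : Type*} {mΩ : MeasurableSpace Ω}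
    [MeasurableSpace E] [MeasurableSpace F']
    (P : Measure Ω) [IsProbabilityMeasure P]
    (F Ftil : ℝ → MeasurableSpace Ω)
    (hsub : ∀ t, Ftil t ≤ F t) (hFle : ∀ t, F t ≤ mΩ)
    (hFtilmono : ∀ s t : ℝ, s ≤ t → Ftil s ≤ Ftil t)
    (τ : Ω → ℝ) (β : ℝ → ℝ → Ω → ℝ)
    (hβmeas : ∀ t u, StronglyMeasurable[F t] (β t u))
    (hβint : ∀ t u, Integrable (β t u) P)
    -- the density hypothesis w.r.t. the large filtration:
    (hdens : ∀ s t : ℝ,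
      P[Set.indicator {ω | s < τ ω} (fun _ => (1 : ℝ)) | F t]
        =ᵐ[P] fun ω => ∫ u in Set.Ioi s, β t u ω)
    (hconsist : ∀ u t : ℝ, u ≤ t → β t u =ᵐ[P] β u u)
    -- Fubini for conditional expectation (valid under integrability):
    (hFub : ∀ s t : ℝ,
      P[(fun ω => ∫ u in Set.Ioi s, β t u ω) | Ftil t]
        =ᵐ[P] fun ω => ∫ u in Set.Ioi s, (P[β t u | Ftil t]) ω)
    -- structure of `β(u,u)`: an `F̃_u`-measurable factor and a factor independent of `F̃`:
    (M : ℝ → Ω → E) (hM : ∀ u, Measurable[Ftil u] (M u))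
    (Z : ℝ → Ω → F') (hZmeas : ∀ u, Measurable (Z u))
    (hindep : ∀ u t : ℝ, Indep (MeasurableSpace.comap (Z u) inferInstance) (Ftil t) P)
    (k : ℝ → E → F' → ℝ) (hk : ∀ u, Measurable (Function.uncurry (k u)))
    (Ck : ℝ) (hkbdd : ∀ u x z, |k u x z| ≤ Ck)
    (hβuu : ∀ u ω, β u u ω = k u (M u ω) (Z u ω)) :
    (∀ s t : ℝ,
      P[Set.indicator {ω | s < τ ω} (fun _ => (1 : ℝ)) | Ftil t]
        =ᵐ[P] fun ω => ∫ u in Set.Ioi s, (P[β t u | Ftil t]) ω) ∧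
      (∀ u t : ℝ, u ≤ t → P[β t u | Ftil t] =ᵐ[P] P[β u u | Ftil u]) :=
  stmt11_general P F Ftil hsub hFle hFtilmono τ β hdens hconsist hFub M hM Z hZmeas hindep k hk Ck
    hkbdd hβuu
end

section
/- On the pre-death set {t < τ}, the filter π_t(λ) coincides with the 𝔽̃-adapted process π̂_t(λ)(ω) = E[λ(t, μ_t(ω), Z_t) e^{−∫₀ᵗ λ(u, μ_u(ω), Z_u)du}] / E[e^{−∫₀ᵗ λ(u, μ_u(ω), Z_u)du}], where the expectation is over Z only (with the μ-trajectory frozen). -/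
open MeasureTheory ProbabilityTheory Real

/-!
Write `Λ = ∫₀ᵗ λ` and `S = {t < τ} = {Λ < Θ}`. On `S` every event `{τ ≤ s}`, `s ≤ t`, fails,
so `𝓖̃_t` and `F̃_t` have the same trace on `S`, and it suffices to compare integrals over the
sets `{ω₁ ∈ B} ∩ S` with `B ∈ F̃_t`. Integrating out the unit-exponential threshold `Θ` turns
`1_S` into the survival factor `e^{-Λ}`, so both `λ_t` and `π̂_t` integrate over such a set to
`∫_B E_Z[λ_t e^{-Λ}] dP₁`. The remaining point is that `π̂_t` is `F̃_t`-measurable although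
`λ` is only assumed adapted slice by slice in `Z`.
-/

lemma lt_sInf_setOf_le_iff {F : ℝ → ℝ} (hF : Monotone F) (hFc : Continuous F) {θ t : ℝ}
    (ht : 0 ≤ t) (hθ : ∃ u, 0 ≤ u ∧ θ ≤ F u) :
    t < sInf {u | 0 ≤ u ∧ θ ≤ F u} ↔ F t < θ := by
  have hbdd : BddBelow {u | 0 ≤ u ∧ θ ≤ F u} := ⟨0, fun u hu => hu.1⟩
  constructor
  · intro h
    by_contra! hle
    exact (csInf_le hbdd ⟨ht, hle⟩).not_gt h
  · intro h
    have hmem := ((isClosed_Ici (a := (0 : ℝ))).inter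
      (isClosed_le continuous_const hFc)).csInf_mem hθ hbdd
    by_contra! hle
    exact (hmem.2.trans (hF hle)).not_gt h

lemma intervalIntegrable_of_abs_le {f : ℝ → ℝ} (hf : Measurable f) {b : ℝ}
    (hb : ∀ s, |f s| ≤ b) (u v : ℝ) : IntervalIntegrable f volume u v :=
  intervalIntegrable_const.mono_fun hf.aestronglyMeasurable
    (ae_of_all _ fun s => (hb s).trans (le_abs_self b) : ∀ᵐ s ∂_, ‖f s‖ ≤ ‖b‖)

lemma lt_sInf_setOf_le_integral_iff {f : ℝ → ℝ} (hf : Measurable f) {a b : ℝ} (ha : 0 < a)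
    (hfab : ∀ s, a ≤ f s ∧ f s ≤ b) {θ t : ℝ} (ht : 0 ≤ t) :
    t < sInf {u | 0 ≤ u ∧ θ ≤ ∫ s in (0 : ℝ)..u, f s} ↔ ∫ s in (0 : ℝ)..t, f s < θ := by
  have hfi := intervalIntegrable_of_abs_le hf fun s =>
    abs_le.mpr ⟨by linarith [hfab s], (hfab s).2⟩
  refine lt_sInf_setOf_le_iff (fun u v huv => ?_) (intervalIntegral.continuous_primitive hfi 0)
    ht ⟨max (θ / a) 0, le_max_right _ _, ?_⟩
  · rw [← sub_nonneg, intervalIntegral.integral_interval_sub_left (hfi 0 v) (hfi 0 u)]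
    exact intervalIntegral.integral_nonneg huv fun s _ => ha.le.trans (hfab s).1
  · calc θ ≤ a * max (θ / a) 0 := by
          rw [← div_le_iff₀' ha]; exact le_max_left _ _
      _ = ∫ _ in (0 : ℝ)..max (θ / a) 0, a := by simp [mul_comm]
      _ ≤ ∫ s in (0 : ℝ)..max (θ / a) 0, f s :=
          intervalIntegral.integral_mono_on (le_max_right _ _) intervalIntegrable_const
            (hfi _ _) fun s _ => (hfab s).1

section ObservationSigma

variable {α β : Type*}

/-- For `f = Prod.fst` and `F = F̃_t` this is the paper's `𝓖̃_t`. -/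
abbrev observationSigma (f : α → β) (F : MeasurableSpace β) (τ : α → ℝ) (t : ℝ) :
    MeasurableSpace α :=
  F.comap f ⊔ ⨆ s ∈ Set.Iic t, MeasurableSpace.comap (fun ω => τ ω ≤ s) ⊤

variable {f : α → β} {F : MeasurableSpace β} {τ : α → ℝ} {t : ℝ}

lemma observationSigma_le {m : MeasurableSpace α} {mβ : MeasurableSpace β} (hF : F ≤ mβ)
    (hf : Measurable[m, mβ] f) (hτ : ∀ s, MeasurableSet[m] {ω | τ ω ≤ s}) :
    observationSigma f F τ t ≤ m :=
  sup_le ((MeasurableSpace.comap_mono hF).trans hf.comap_le)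
    (iSup₂_le fun s _ => (measurable_to_prop (by simpa using hτ s)).comap_le)

lemma measurableSet_observationSigma_lt :
    MeasurableSet[observationSigma f F τ t] {ω | t < τ ω} := by
  have hτt : MeasurableSet[observationSigma f F τ t] {ω | τ ω ≤ t} :=
    ((le_iSup₂ (f := fun s (_ : s ∈ Set.Iic t) =>
      MeasurableSpace.comap (fun ω => τ ω ≤ s) ⊤) t Set.self_mem_Iic).trans le_sup_right)
      _ ⟨{p | p}, trivial, rfl⟩
  simpa only [Set.compl_ofPred, not_le] using hτt.compl

lemma MeasurableSet.exists_inter_lt_eq_preimage_inter {A : Set α}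
    (hA : MeasurableSet[observationSigma f F τ t] A) :
    ∃ B, MeasurableSet[F] B ∧ A ∩ {ω | t < τ ω} = f ⁻¹' B ∩ {ω | t < τ ω} := by
  set S := {ω | t < τ ω}
  have htrace : (observationSigma f F τ t).comap (Subtype.val : S → α)
      ≤ F.comap (f ∘ Subtype.val) := by
    simp only [observationSigma, MeasurableSpace.comap_sup, MeasurableSpace.comap_iSup,
      MeasurableSpace.comap_comp]
    refine sup_le le_rfl (iSup₂_le fun s hs => ?_)
    rw [show (fun ω => τ ω ≤ s) ∘ Subtype.val = fun _ : S => False from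
      funext fun ω => eq_false (not_le.mpr (lt_of_le_of_lt hs ω.2)),
      MeasurableSpace.comap_const]
    exact bot_le
  obtain ⟨B, hB, hBA⟩ := htrace _ ⟨A, hA, rfl⟩
  refine ⟨B, hB, ?_⟩
  rw [Set.inter_comm, Set.inter_comm _ S]
  exact (Subtype.preimage_coe_eq_preimage_coe_iff.mp hBA).symm

end ObservationSigma

namespace MeasureTheory

variable {X : Type*} {m m0 : MeasurableSpace X} {μ : Measure X} [IsFiniteMeasure μ]

lemma integral_mul_sub_condExp_eq_zero (hm : m ≤ m0) {f h : X → ℝ} (hf : Integrable f μ)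
    (hh : AEStronglyMeasurable[m] h μ) (hhf : Integrable (h * f) μ) :
    ∫ x, h x * (f x - μ[f|m] x) ∂μ = 0 := by
  have hpull : μ[h * f|m] =ᵐ[μ] h * μ[f|m] := condExp_mul_of_aestronglyMeasurable_left hh hhf hf
  have hhg : Integrable (h * μ[f|m]) μ := integrable_condExp.congr hpull
  calc ∫ x, h x * (f x - μ[f|m] x) ∂μ = ∫ x, (h * f) x ∂μ - ∫ x, (h * μ[f|m]) x ∂μ := by
        simp only [mul_sub]; exact integral_sub hhf hhg
    _ = 0 := by rw [← integral_condExp hm, integral_congr_ae hpull, sub_self]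

/-- The deviation `I - μ[I|m]` of the parametric integral `I = ∫ f · y ∂ν` is orthogonal both to
`μ[I|m]` and, slice by slice, to `I` itself, so it vanishes in `L²`. -/
lemma aestronglyMeasurable_integral_of_ae_slice {Y : Type*} [MeasurableSpace Y]
    {ν : Measure Y} [IsFiniteMeasure ν] (hm : m ≤ m0) {f : X → Y → ℝ}
    (hf : Measurable (Function.uncurry f)) {C : ℝ} (hC : ∀ x y, |f x y| ≤ C)
    (hslice : ∀ᵐ y ∂ν, AEStronglyMeasurable[m] (fun x => f x y) μ) :
    AEStronglyMeasurable[m] (fun x => ∫ y, f x y ∂ν) μ := by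
  set I := fun x => ∫ y, f x y ∂ν
  set g := μ[I|m]
  have hIm : StronglyMeasurable I := hf.stronglyMeasurable.integral_prod_right
  have hI_bd : ∀ x, |I x| ≤ C * ν.real Set.univ := fun x => by
    simpa [mul_comm] using norm_integral_le_of_norm_le_const (μ := ν) (f := fun y => f x y)
      (ae_of_all ν (hC x))
  have hI : Integrable I μ := .of_bound hIm.aestronglyMeasurable _ (ae_of_all _ hI_bd)
  have hgm : StronglyMeasurable[m] g := stronglyMeasurable_condExp
  have hg_bd : ∀ᵐ x ∂μ, |g x| ≤ C * ν.real Set.univ :=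
    ae_bdd_abs_condExp_of_ae_bdd_abs (ae_of_all _ hI_bd)
  have hd : Integrable (fun x => I x - g x) μ := hI.sub integrable_condExp
  have hgd : ∫ x, g x * (I x - g x) ∂μ = 0 :=
    integral_mul_sub_condExp_eq_zero hm hI hgm.aestronglyMeasurable
      (hI.bdd_mul (hgm.mono hm).aestronglyMeasurable hg_bd)
  have hfd : Integrable (Function.uncurry fun x y => f x y * (I x - g x)) (μ.prod ν) :=
    (hd.comp_fst ν).bdd_mul (c := C) hf.aestronglyMeasurable (ae_of_all _ fun p => hC p.1 p.2)
  have hId : ∫ x, I x * (I x - g x) ∂μ = 0 := by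
    calc ∫ x, I x * (I x - g x) ∂μ = ∫ x, ∫ y, f x y * (I x - g x) ∂ν ∂μ := by
          simp only [I, integral_mul_const]
      _ = ∫ y, ∫ x, f x y * (I x - g x) ∂μ ∂ν := integral_integral_swap hfd
      _ = 0 := integral_eq_zero_of_ae <| hslice.mono fun y hy =>
          integral_mul_sub_condExp_eq_zero hm hI hy <|
            hI.bdd_mul (c := C) (hf.comp measurable_prodMk_right).aestronglyMeasurable
              (ae_of_all _ fun x => hC x y)
  have hIg : I =ᵐ[μ] g := by
    have hsq : (fun x => (I x - g x) ^ 2) = fun x => I x * (I x - g x) - g x * (I x - g x) := by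
      ext x; ring
    have hIdi := hd.bdd_mul hIm.aestronglyMeasurable (ae_of_all _ hI_bd)
    have hgdi := hd.bdd_mul (hgm.mono hm).aestronglyMeasurable hg_bd
    have hsq0 : ∫ x, (I x - g x) ^ 2 ∂μ = 0 := by
      rw [hsq, integral_sub hIdi hgdi, hId, hgd, sub_zero]
    filter_upwards [(integral_eq_zero_iff_of_nonneg (fun x => sq_nonneg (I x - g x))
      (hsq ▸ hIdi.sub hgdi)).mp hsq0] with x hx
    simpa [sub_eq_zero] using hx
  exact ⟨g, hgm, hIg⟩

lemma ae_condExp_eq_of_forall_setIntegral_inter_eq {E : Type*} [NormedAddCommGroup E]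
    [NormedSpace ℝ E] [CompleteSpace E] (hm : m ≤ m0) {S : Set X} (hS : MeasurableSet[m] S)
    {f g : X → E} (hf : Integrable f μ) (hg : Integrable g μ) (hgm : AEStronglyMeasurable[m] g μ)
    (hfg : ∀ A, MeasurableSet[m] A → ∫ x in A ∩ S, g x ∂μ = ∫ x in A ∩ S, f x ∂μ) :
    ∀ᵐ x ∂μ, x ∈ S → μ[f|m] x = g x := by
  obtain ⟨g', hg'm, hgg'⟩ := hgm
  have hind : S.indicator g =ᵐ[μ] μ[S.indicator f|m] :=
    ae_eq_condExp_of_forall_setIntegral_eq hm (hf.indicator (hm _ hS))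
      (fun A _ _ => (hg.indicator (hm _ hS)).integrableOn)
      (fun A hA _ => by rw [setIntegral_indicator (hm _ hS), setIntegral_indicator (hm _ hS),
        hfg A hA])
      ⟨S.indicator g', hg'm.indicator hS, hgg'.mono fun x hx => by simp only [Set.indicator, hx]⟩
  filter_upwards [hind, condExp_indicator hf hS] with x h₁ h₂ hx
  rw [Set.indicator_of_mem hx] at h₁ h₂
  rw [← h₂, h₁]

lemma AEStronglyMeasurable.comap_fst {α β γ : Type*} [TopologicalSpace γ]
    {m mα : MeasurableSpace α} [MeasurableSpace β] {μ : Measure α} {ν : Measure β}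
    {f : α → γ} (hf : AEStronglyMeasurable[m] f μ) :
    AEStronglyMeasurable[m.comap Prod.fst] (fun p : α × β => f p.1) (μ.prod ν) :=
  ⟨fun p => hf.mk f p.1, hf.stronglyMeasurable_mk.comp_measurable (comap_measurable _),
    Measure.quasiMeasurePreserving_fst.ae_eq hf.ae_eq_mk⟩

end MeasureTheory

lemma abs_integral_mul_div_integral_le {α : Type*} [MeasurableSpace α] {μ : Measure α}
    {h w : α → ℝ} (hw : Integrable w μ) (hw0 : ∀ x, 0 ≤ w x)
    (hhw : Integrable (fun x => h x * w x) μ) {b : ℝ} (hb0 : 0 ≤ b) (hb : ∀ x, |h x| ≤ b) :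
    |(∫ x, h x * w x ∂μ) / ∫ x, w x ∂μ| ≤ b := by
  have hw_int : 0 ≤ ∫ x, w x ∂μ := integral_nonneg hw0
  rw [abs_div, abs_of_nonneg hw_int]
  refine div_le_of_le_mul₀ hw_int hb0 ?_
  calc |∫ x, h x * w x ∂μ| ≤ ∫ x, |h x * w x| ∂μ := abs_integral_le_integral_abs
    _ ≤ ∫ x, b * w x ∂μ := integral_mono hhw.abs (hw.const_mul b) fun x => by
        rw [abs_mul, abs_of_nonneg (hw0 x)]; exact mul_le_mul_of_nonneg_right (hb x) (hw0 x)
    _ = b * ∫ x, w x ∂μ := integral_const_mul b _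

section Threshold

variable {Ω₁ Ω₂ Ω₃ : Type*} [MeasurableSpace Ω₁] [MeasurableSpace Ω₂] [MeasurableSpace Ω₃]
  {P₁ : Measure Ω₁} {P₂ : Measure Ω₂} {P₃ : Measure Ω₃} [IsFiniteMeasure P₁]
  [IsFiniteMeasure P₂] [IsFiniteMeasure P₃] {Θ : Ω₃ → ℝ}

lemma integral_indicator_lt_threshold (hΘ : Measurable Θ)
    (hΘexp : ∀ x : ℝ, 0 ≤ x → P₃ {ω₃ | x < Θ ω₃} = ENNReal.ofReal (exp (-x)))
    {Λ : Ω₂ → ℝ} (hΛ : Measurable Λ) (hΛ0 : ∀ ω₂, 0 ≤ Λ ω₂)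
    {h : Ω₂ → ℝ} (hh : Measurable h) {C : ℝ} (hC : ∀ ω₂, |h ω₂| ≤ C) :
    ∫ q, {q : Ω₂ × Ω₃ | Λ q.1 < Θ q.2}.indicator (fun q => h q.1) q ∂(P₂.prod P₃)
      = ∫ ω₂, h ω₂ * exp (-Λ ω₂) ∂P₂ := by
  have hS : MeasurableSet {q : Ω₂ × Ω₃ | Λ q.1 < Θ q.2} :=
    measurableSet_lt (hΛ.comp measurable_fst) (hΘ.comp measurable_snd)
  have hint : Integrable ({q : Ω₂ × Ω₃ | Λ q.1 < Θ q.2}.indicator fun q => h q.1) (P₂.prod P₃) :=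
    .of_bound ((hh.comp measurable_fst).indicator hS).aestronglyMeasurable C
      (ae_of_all _ fun q => (norm_indicator_le_norm_self _ q).trans (hC q.1))
  rw [integral_prod _ hint]
  refine integral_congr_ae (ae_of_all _ fun ω₂ => ?_)
  change ∫ ω₃, {ω₃ | Λ ω₂ < Θ ω₃}.indicator (fun _ => h ω₂) ω₃ ∂P₃ = _
  rw [integral_indicator_const _ (measurableSet_lt measurable_const hΘ), measureReal_def,
    hΘexp _ (hΛ0 ω₂), ENNReal.toReal_ofReal (exp_pos _).le, smul_eq_mul, mul_comm]

lemma setIntegral_inter_lt_threshold (hΘ : Measurable Θ)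
    (hΘexp : ∀ x : ℝ, 0 ≤ x → P₃ {ω₃ | x < Θ ω₃} = ENNReal.ofReal (exp (-x)))
    {Λ : Ω₁ → Ω₂ → ℝ} (hΛ : Measurable (Function.uncurry Λ)) (hΛ0 : ∀ ω₁ ω₂, 0 ≤ Λ ω₁ ω₂)
    {h : Ω₁ → Ω₂ → ℝ} (hh : Measurable (Function.uncurry h)) {C : ℝ}
    (hC : ∀ ω₁ ω₂, |h ω₁ ω₂| ≤ C) {B : Set Ω₁} (hB : MeasurableSet B) :
    ∫ ω in Prod.fst ⁻¹' B ∩ {ω : Ω₁ × Ω₂ × Ω₃ | Λ ω.1 ω.2.1 < Θ ω.2.2}, h ω.1 ω.2.1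
        ∂(P₁.prod (P₂.prod P₃))
      = ∫ ω₁ in B, ∫ ω₂, h ω₁ ω₂ * exp (-Λ ω₁ ω₂) ∂P₂ ∂P₁ := by
  set S := {ω : Ω₁ × Ω₂ × Ω₃ | Λ ω.1 ω.2.1 < Θ ω.2.2}
  have hS : MeasurableSet S :=
    measurableSet_lt (hΛ.comp (measurable_fst.prodMk (measurable_fst.comp measurable_snd)))
      (hΘ.comp (measurable_snd.comp measurable_snd))
  have hhm : Measurable fun ω : Ω₁ × Ω₂ × Ω₃ => h ω.1 ω.2.1 :=
    hh.comp (measurable_fst.prodMk (measurable_fst.comp measurable_snd))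
  have hint : Integrable (S.indicator fun ω => h ω.1 ω.2.1) (P₁.prod (P₂.prod P₃)) :=
    .of_bound (hhm.indicator hS).aestronglyMeasurable C
      (ae_of_all _ fun ω => (norm_indicator_le_norm_self _ ω).trans (hC _ _))
  rw [← setIntegral_indicator hS, ← Set.prod_univ, setIntegral_prod _ hint.integrableOn]
  refine setIntegral_congr_fun hB fun ω₁ _ => ?_
  rw [Measure.restrict_univ]
  exact integral_indicator_lt_threshold hΘ hΘexp (hΛ.comp measurable_prodMk_left) (hΛ0 ω₁)
    (hh.comp measurable_prodMk_left) (hC ω₁)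

end Threshold

section CumulativeIntensity

variable {Ω₁ Ω₂ : Type*} [MeasurableSpace Ω₂] {lam : ℝ → Ω₁ → Ω₂ → ℝ}

lemma measurable_intervalIntegral_uncurry [MeasurableSpace Ω₁]
    (hlam : Measurable fun p : ℝ × Ω₁ × Ω₂ => lam p.1 p.2.1 p.2.2) (u v : ℝ) :
    Measurable (Function.uncurry fun ω₁ ω₂ => ∫ s in u..v, lam s ω₁ ω₂) := by
  have hIoc : ∀ u v : ℝ, Measurable fun q : Ω₁ × Ω₂ => ∫ s in Set.Ioc u v, lam s q.1 q.2 :=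
    fun u v => (StronglyMeasurable.integral_prod_right
      (f := fun (q : Ω₁ × Ω₂) (s : ℝ) => lam s q.1 q.2)
      (hlam.comp measurable_swap).stronglyMeasurable).measurable
  exact (hIoc u v).sub (hIoc v u)

lemma aestronglyMeasurable_intervalIntegral_of_adapted {m m₁ : MeasurableSpace Ω₁} (hm : m ≤ m₁)
    {P₁ : Measure Ω₁} [IsFiniteMeasure P₁]
    (hlam : Measurable fun p : ℝ × Ω₁ × Ω₂ => lam p.1 p.2.1 p.2.2) {b : ℝ}
    (hb : ∀ s ω₁ ω₂, |lam s ω₁ ω₂| ≤ b) {t : ℝ} (ht : 0 ≤ t)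
    (hadapt : ∀ s ≤ t, ∀ ω₂, Measurable[m] fun ω₁ => lam s ω₁ ω₂) (ω₂ : Ω₂) :
    AEStronglyMeasurable[m] (fun ω₁ => ∫ s in (0 : ℝ)..t, lam s ω₁ ω₂) P₁ := by
  simp only [intervalIntegral.integral_of_le ht]
  exact aestronglyMeasurable_integral_of_ae_slice hm
    (hlam.comp (measurable_snd.prodMk (measurable_fst.prodMk measurable_const)))
    (fun ω₁ s => hb s ω₁ ω₂) <| (ae_restrict_mem measurableSet_Ioc).mono fun s hs =>
      (hadapt s hs.2 ω₂).aestronglyMeasurable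

end CumulativeIntensity

section TiltedMean

variable {Ω₁ Ω₂ Ω₃ : Type*} [MeasurableSpace Ω₂] {P₂ : Measure Ω₂}

/-- For `Λ = ∫₀ᵗ λ` and `h = λ t` this is the paper's `π̂_t(λ)`. -/
noncomputable def tiltedMean (P₂ : Measure Ω₂) (Λ h : Ω₁ → Ω₂ → ℝ) (ω₁ : Ω₁) : ℝ :=
  (∫ ω₂, h ω₁ ω₂ * exp (-Λ ω₁ ω₂) ∂P₂) / ∫ ω₂, exp (-Λ ω₁ ω₂) ∂P₂

variable {Λ h : Ω₁ → Ω₂ → ℝ}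

lemma integrable_exp_neg [IsFiniteMeasure P₂] [MeasurableSpace Ω₁]
    (hΛ : Measurable (Function.uncurry Λ)) (hΛ0 : ∀ ω₁ ω₂, 0 ≤ Λ ω₁ ω₂) (ω₁ : Ω₁) :
    Integrable (fun ω₂ => exp (-Λ ω₁ ω₂)) P₂ :=
  .of_bound (hΛ.comp measurable_prodMk_left).neg.exp.aestronglyMeasurable 1
    (ae_of_all _ fun ω₂ => by simpa [abs_exp] using hΛ0 ω₁ ω₂)

lemma measurable_tiltedMean [MeasurableSpace Ω₁] [SFinite P₂]
    (hΛ : Measurable (Function.uncurry Λ)) (hh : Measurable (Function.uncurry h)) :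
    Measurable (tiltedMean P₂ Λ h) :=
  (hh.mul hΛ.neg.exp).stronglyMeasurable.integral_prod_right.measurable.div
    hΛ.neg.exp.stronglyMeasurable.integral_prod_right.measurable

lemma abs_tiltedMean_le [IsFiniteMeasure P₂] [MeasurableSpace Ω₁]
    (hΛ : Measurable (Function.uncurry Λ)) (hΛ0 : ∀ ω₁ ω₂, 0 ≤ Λ ω₁ ω₂)
    (hh : Measurable (Function.uncurry h)) {b : ℝ} (hb0 : 0 ≤ b)
    (hb : ∀ ω₁ ω₂, |h ω₁ ω₂| ≤ b) (ω₁ : Ω₁) : |tiltedMean P₂ Λ h ω₁| ≤ b :=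
  abs_integral_mul_div_integral_le (integrable_exp_neg hΛ hΛ0 ω₁) (fun _ => (exp_pos _).le)
    ((integrable_exp_neg hΛ hΛ0 ω₁).bdd_mul (c := b)
      (hh.comp measurable_prodMk_left).aestronglyMeasurable (ae_of_all _ (hb ω₁))) hb0 (hb ω₁)

lemma tiltedMean_mul_integral_exp [IsFiniteMeasure P₂] [NeZero P₂] [MeasurableSpace Ω₁]
    (hΛ : Measurable (Function.uncurry Λ)) (hΛ0 : ∀ ω₁ ω₂, 0 ≤ Λ ω₁ ω₂) (ω₁ : Ω₁) :
    tiltedMean P₂ Λ h ω₁ * ∫ ω₂, exp (-Λ ω₁ ω₂) ∂P₂ = ∫ ω₂, h ω₁ ω₂ * exp (-Λ ω₁ ω₂) ∂P₂ :=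
  div_mul_cancel₀ _ (integral_exp_pos (integrable_exp_neg hΛ hΛ0 ω₁)).ne'

lemma aestronglyMeasurable_integral_mul_exp_neg [IsFiniteMeasure P₂]
    {m m₁ : MeasurableSpace Ω₁} (hm : m ≤ m₁) {P₁ : Measure Ω₁} [IsFiniteMeasure P₁]
    (hΛ : Measurable (Function.uncurry Λ)) (hΛ0 : ∀ ω₁ ω₂, 0 ≤ Λ ω₁ ω₂)
    (hh : Measurable (Function.uncurry h)) {C : ℝ} (hC : ∀ ω₁ ω₂, |h ω₁ ω₂| ≤ C)
    (hΛ_slice : ∀ ω₂, AEStronglyMeasurable[m] (fun ω₁ => Λ ω₁ ω₂) P₁)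
    (hh_slice : ∀ ω₂, AEStronglyMeasurable[m] (fun ω₁ => h ω₁ ω₂) P₁) :
    AEStronglyMeasurable[m] (fun ω₁ => ∫ ω₂, h ω₁ ω₂ * exp (-Λ ω₁ ω₂) ∂P₂) P₁ :=
  aestronglyMeasurable_integral_of_ae_slice hm (hh.mul hΛ.neg.exp)
    (fun ω₁ ω₂ => by
      rw [abs_mul, abs_exp]
      exact (mul_le_of_le_one_right (abs_nonneg _) (exp_le_one_iff.mpr
        (neg_nonpos.mpr (hΛ0 ω₁ ω₂)))).trans (hC ω₁ ω₂))
    (ae_of_all _ fun ω₂ => (hh_slice ω₂).mul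
      (continuous_exp.comp_aestronglyMeasurable (hΛ_slice ω₂).neg))

lemma aestronglyMeasurable_tiltedMean [IsFiniteMeasure P₂]
    {m m₁ : MeasurableSpace Ω₁} (hm : m ≤ m₁) {P₁ : Measure Ω₁} [IsFiniteMeasure P₁]
    (hΛ : Measurable (Function.uncurry Λ)) (hΛ0 : ∀ ω₁ ω₂, 0 ≤ Λ ω₁ ω₂)
    (hh : Measurable (Function.uncurry h)) {C : ℝ} (hC : ∀ ω₁ ω₂, |h ω₁ ω₂| ≤ C)
    (hΛ_slice : ∀ ω₂, AEStronglyMeasurable[m] (fun ω₁ => Λ ω₁ ω₂) P₁)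
    (hh_slice : ∀ ω₂, AEStronglyMeasurable[m] (fun ω₁ => h ω₁ ω₂) P₁) :
    AEStronglyMeasurable[m] (tiltedMean P₂ Λ h) P₁ := by
  have hD := aestronglyMeasurable_integral_mul_exp_neg (P₂ := P₂) hm hΛ hΛ0
    (h := fun _ _ => 1) measurable_const (fun _ _ => abs_one.le) hΛ_slice
    fun _ => aestronglyMeasurable_const
  simp only [one_mul] at hD
  exact (aestronglyMeasurable_integral_mul_exp_neg hm hΛ hΛ0 hh hC hΛ_slice hh_slice).div₀ hD

lemma setIntegral_tiltedMean [MeasurableSpace Ω₁] [MeasurableSpace Ω₃] {P₁ : Measure Ω₁}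
    [IsFiniteMeasure P₁] [IsFiniteMeasure P₂] [NeZero P₂] {P₃ : Measure Ω₃}
    [IsFiniteMeasure P₃]
    {Θ : Ω₃ → ℝ} (hΘ : Measurable Θ)
    (hΘexp : ∀ x : ℝ, 0 ≤ x → P₃ {ω₃ | x < Θ ω₃} = ENNReal.ofReal (exp (-x)))
    (hΛ : Measurable (Function.uncurry Λ)) (hΛ0 : ∀ ω₁ ω₂, 0 ≤ Λ ω₁ ω₂)
    (hh : Measurable (Function.uncurry h)) {b : ℝ} (hb0 : 0 ≤ b)
    (hb : ∀ ω₁ ω₂, |h ω₁ ω₂| ≤ b) {B : Set Ω₁} (hB : MeasurableSet B) :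
    ∫ ω in Prod.fst ⁻¹' B ∩ {ω : Ω₁ × Ω₂ × Ω₃ | Λ ω.1 ω.2.1 < Θ ω.2.2}, tiltedMean P₂ Λ h ω.1
        ∂(P₁.prod (P₂.prod P₃))
      = ∫ ω in Prod.fst ⁻¹' B ∩ {ω : Ω₁ × Ω₂ × Ω₃ | Λ ω.1 ω.2.1 < Θ ω.2.2}, h ω.1 ω.2.1
        ∂(P₁.prod (P₂.prod P₃)) := by
  rw [setIntegral_inter_lt_threshold hΘ hΘexp hΛ hΛ0 (h := fun ω₁ _ => tiltedMean P₂ Λ h ω₁)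
      ((measurable_tiltedMean hΛ hh).comp measurable_fst)
      (fun ω₁ _ => abs_tiltedMean_le hΛ hΛ0 hh hb0 hb ω₁) hB,
    setIntegral_inter_lt_threshold hΘ hΘexp hΛ hΛ0 hh hb hB]
  refine setIntegral_congr_fun hB fun ω₁ _ => ?_
  rw [integral_const_mul, tiltedMean_mul_integral_exp hΛ hΛ0]

theorem ae_condExp_eq_tiltedMean {F m₁ : MeasurableSpace Ω₁} [MeasurableSpace Ω₃] (hF : F ≤ m₁)
    {P₁ : Measure Ω₁} [IsFiniteMeasure P₁] [IsFiniteMeasure P₂] [NeZero P₂] {P₃ : Measure Ω₃}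
    [IsFiniteMeasure P₃] {Θ : Ω₃ → ℝ} (hΘ : Measurable Θ)
    (hΘexp : ∀ x : ℝ, 0 ≤ x → P₃ {ω₃ | x < Θ ω₃} = ENNReal.ofReal (exp (-x)))
    (hΛ : Measurable (Function.uncurry Λ)) (hΛ0 : ∀ ω₁ ω₂, 0 ≤ Λ ω₁ ω₂)
    (hh : Measurable (Function.uncurry h)) {b : ℝ} (hb0 : 0 ≤ b)
    (hb : ∀ ω₁ ω₂, |h ω₁ ω₂| ≤ b)
    (hΛ_slice : ∀ ω₂, AEStronglyMeasurable[F] (fun ω₁ => Λ ω₁ ω₂) P₁)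
    (hh_slice : ∀ ω₂, AEStronglyMeasurable[F] (fun ω₁ => h ω₁ ω₂) P₁)
    {τ : Ω₁ × Ω₂ × Ω₃ → ℝ} (hτ : ∀ s, MeasurableSet {ω | τ ω ≤ s}) {t : ℝ}
    (hS : {ω | t < τ ω} = {ω : Ω₁ × Ω₂ × Ω₃ | Λ ω.1 ω.2.1 < Θ ω.2.2}) :
    ∀ᵐ ω ∂(P₁.prod (P₂.prod P₃)), t < τ ω →
      (P₁.prod (P₂.prod P₃))[fun ω => h ω.1 ω.2.1 | observationSigma Prod.fst F τ t] ω
        = tiltedMean P₂ Λ h ω.1 := by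
  refine ae_condExp_eq_of_forall_setIntegral_inter_eq
    (observationSigma_le hF measurable_fst hτ) measurableSet_observationSigma_lt
    (.of_bound (hh.comp (measurable_fst.prodMk measurable_snd.fst)).aestronglyMeasurable b
      (ae_of_all _ fun ω => hb ω.1 ω.2.1))
    (.of_bound ((measurable_tiltedMean hΛ hh).comp measurable_fst).aestronglyMeasurable b
      (ae_of_all _ fun ω => abs_tiltedMean_le hΛ hΛ0 hh hb0 hb ω.1))
    (.mono le_sup_left (aestronglyMeasurable_tiltedMean hF hΛ hΛ0 hh hb hΛ_slice hh_slice
      |>.comap_fst (ν := P₂.prod P₃))) fun A hA => ?_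
  obtain ⟨B, hB, hAS⟩ := hA.exists_inter_lt_eq_preimage_inter
  rw [hAS, hS]
  exact setIntegral_tiltedMean hΘ hΘexp hΛ hΛ0 hh hb0 hb (hF B hB)

end TiltedMean

theorem stmt12_general {Ω₁ Ω₂ Ω₃ : Type*}
    [m₁ : MeasurableSpace Ω₁] [MeasurableSpace Ω₂] [MeasurableSpace Ω₃]
    (P₁ : Measure Ω₁) (P₂ : Measure Ω₂) (P₃ : Measure Ω₃)
    [IsProbabilityMeasure P₁] [IsProbabilityMeasure P₂] [IsProbabilityMeasure P₃]
    (t : ℝ) (ht : 0 ≤ t)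
    (a b : ℝ) (ha : 0 < a)
    (lam : ℝ → Ω₁ → Ω₂ → ℝ)
    (hlammeas : Measurable fun p : ℝ × Ω₁ × Ω₂ => lam p.1 p.2.1 p.2.2)
    (hlambd : ∀ s ω₁ ω₂, a ≤ lam s ω₁ ω₂ ∧ lam s ω₁ ω₂ ≤ b)
    (Ftil : ℝ → MeasurableSpace Ω₁) (hFle : ∀ s, Ftil s ≤ m₁)
    (hadapt : ∀ s : ℝ, s ≤ t → ∀ ω₂, Measurable[Ftil t] fun ω₁ => lam s ω₁ ω₂)
    (Θ : Ω₃ → ℝ) (hΘmeas : Measurable Θ)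
    (hΘexp : ∀ x : ℝ, 0 ≤ x → P₃ {ω₃ | x < Θ ω₃} = ENNReal.ofReal (Real.exp (-x)))
    (τ : Ω₁ × Ω₂ × Ω₃ → ℝ)
    (hτ : ∀ ω, τ ω = sInf {u : ℝ | 0 ≤ u ∧ Θ ω.2.2 ≤ ∫ s in (0:ℝ)..u, lam s ω.1 ω.2.1})
    (hτmeas : ∀ s : ℝ, MeasurableSet {ω : Ω₁ × Ω₂ × Ω₃ | τ ω ≤ s}) :
    -- the observation σ-algebra `𝓖̃_t = F̃_t ∨ σ(1_{τ ≤ s}, s ≤ t)`: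
    let P : Measure (Ω₁ × Ω₂ × Ω₃) := P₁.prod (P₂.prod P₃)
    let 𝓖t : MeasurableSpace (Ω₁ × Ω₂ × Ω₃) :=
      MeasurableSpace.comap (fun ω => ω.1) (Ftil t)
        ⊔ ⨆ s ∈ Set.Iic t, MeasurableSpace.comap (fun ω => τ ω ≤ s) ⊤
    let πhat : Ω₁ × Ω₂ × Ω₃ → ℝ := fun ω =>
      (∫ ω₂, lam t ω.1 ω₂ * Real.exp (-∫ s in (0:ℝ)..t, lam s ω.1 ω₂) ∂P₂)
        / (∫ ω₂, Real.exp (-∫ s in (0:ℝ)..t, lam s ω.1 ω₂) ∂P₂)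
    ∀ᵐ ω ∂P, t < τ ω →
      (P[fun ω' => lam t ω'.1 ω'.2.1 | 𝓖t]) ω = πhat ω := by
  intro P 𝓖t πhat
  have hb0 : 0 ≤ b := by
    obtain ⟨ω₁, ω₂⟩ := nonempty_of_isProbabilityMeasure (P₁.prod P₂)
    linarith [hlambd 0 ω₁ ω₂]
  have hlam_abs : ∀ s ω₁ ω₂, |lam s ω₁ ω₂| ≤ b := fun s ω₁ ω₂ =>
    abs_le.mpr ⟨by linarith [hlambd s ω₁ ω₂], (hlambd s ω₁ ω₂).2⟩
  set Λ : Ω₁ → Ω₂ → ℝ := fun ω₁ ω₂ => ∫ s in (0:ℝ)..t, lam s ω₁ ω₂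
  have hΛ0 : ∀ ω₁ ω₂, 0 ≤ Λ ω₁ ω₂ := fun ω₁ ω₂ =>
    intervalIntegral.integral_nonneg ht fun s _ => ha.le.trans (hlambd s ω₁ ω₂).1
  have hS : {ω | t < τ ω} = {ω : Ω₁ × Ω₂ × Ω₃ | Λ ω.1 ω.2.1 < Θ ω.2.2} := by
    ext ω
    change t < τ ω ↔ Λ ω.1 ω.2.1 < Θ ω.2.2
    rw [hτ ω]
    exact lt_sInf_setOf_le_integral_iff
      (hlammeas.comp (measurable_prodMk_right (y := (ω.1, ω.2.1)))) ha (hlambd · _ _) ht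
  exact ae_condExp_eq_tiltedMean (hFle t) hΘmeas hΘexp
    (measurable_intervalIntegral_uncurry hlammeas 0 t) hΛ0
    (h := lam t) (hlammeas.comp (measurable_const.prodMk measurable_id)) hb0 (hlam_abs t)
    (aestronglyMeasurable_intervalIntegral_of_adapted (hFle t) hlammeas hlam_abs ht hadapt)
    (fun ω₂ => (hadapt t le_rfl ω₂).aestronglyMeasurable) hτmeas hS

/-- In the Cox model where `Ω = Ω₁ × Ω₂ × Ω₃`, `ω₁` carries the observable
(Brownian) information generating the filtration `F̃`, `ω₂` carries the unobservable factor `Z`,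
`ω₃` carries the unit-exponential threshold `Θ`, and
`τ = inf{u ≥ 0 : ∫₀ᵘ λ(s, μ_s, Z_s)ds ≥ Θ}` (here `lam s ω₁ ω₂ = λ(s, μ_s(ω₁), Z_s(ω₂))`
with `0 < a ≤ lam ≤ b`), the filter `π_t(λ) = E[λ(t,μ_t,Z_t) | 𝓖̃_t]` coincides on the survival
set `{t < τ}` with the `F̃`-adapted process
`π̂_t(λ)(ω) = E_Z[λ(t,μ_t(ω),Z_t) e^{−∫₀ᵗ λ du}] / E_Z[e^{−∫₀ᵗ λ du}]`
(expectation over the `Z`-coordinate only, the `μ`-trajectory being frozen). -/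
theorem stmt12 {Ω₁ Ω₂ Ω₃ : Type*}
    [m₁ : MeasurableSpace Ω₁] [MeasurableSpace Ω₂] [MeasurableSpace Ω₃]
    (P₁ : Measure Ω₁) (P₂ : Measure Ω₂) (P₃ : Measure Ω₃)
    [IsProbabilityMeasure P₁] [IsProbabilityMeasure P₂] [IsProbabilityMeasure P₃]
    (T t : ℝ) (ht : 0 ≤ t) (htT : t ≤ T)
    (a b : ℝ) (ha : 0 < a)
    (lam : ℝ → Ω₁ → Ω₂ → ℝ)
    (hlammeas : Measurable fun p : ℝ × Ω₁ × Ω₂ => lam p.1 p.2.1 p.2.2)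
    (hlambd : ∀ s ω₁ ω₂, a ≤ lam s ω₁ ω₂ ∧ lam s ω₁ ω₂ ≤ b)
    (Ftil : ℝ → MeasurableSpace Ω₁) (hFle : ∀ s, Ftil s ≤ m₁)
    (hadapt : ∀ s : ℝ, s ≤ t → ∀ ω₂, Measurable[Ftil t] fun ω₁ => lam s ω₁ ω₂)
    (Θ : Ω₃ → ℝ) (hΘmeas : Measurable Θ)
    (hΘexp : ∀ x : ℝ, 0 ≤ x → P₃ {ω₃ | x < Θ ω₃} = ENNReal.ofReal (Real.exp (-x)))
    (τ : Ω₁ × Ω₂ × Ω₃ → ℝ)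
    (hτ : ∀ ω, τ ω = sInf {u : ℝ | 0 ≤ u ∧ Θ ω.2.2 ≤ ∫ s in (0:ℝ)..u, lam s ω.1 ω.2.1})
    (hτmeas : ∀ s : ℝ, MeasurableSet {ω : Ω₁ × Ω₂ × Ω₃ | τ ω ≤ s}) :
    -- the observation σ-algebra `𝓖̃_t = F̃_t ∨ σ(1_{τ ≤ s}, s ≤ t)`:
    let P : Measure (Ω₁ × Ω₂ × Ω₃) := P₁.prod (P₂.prod P₃)
    let 𝓖t : MeasurableSpace (Ω₁ × Ω₂ × Ω₃) :=
      MeasurableSpace.comap (fun ω => ω.1) (Ftil t)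
        ⊔ ⨆ s ∈ Set.Iic t, MeasurableSpace.comap (fun ω => τ ω ≤ s) ⊤
    let πhat : Ω₁ × Ω₂ × Ω₃ → ℝ := fun ω =>
      (∫ ω₂, lam t ω.1 ω₂ * Real.exp (-∫ s in (0:ℝ)..t, lam s ω.1 ω₂) ∂P₂)
        / (∫ ω₂, Real.exp (-∫ s in (0:ℝ)..t, lam s ω.1 ω₂) ∂P₂)
    ∀ᵐ ω ∂P, t < τ ω →
      (P[fun ω' => lam t ω'.1 ω'.2.1 | 𝓖t]) ω = πhat ω :=
  stmt12_general (m₁ := m₁) P₁ P₂ P₃ t ht a b ha lam hlammeas hlambd Ftil hFle hadapt Θ hΘmeas hΘexp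
    τ hτ hτmeas
end

section
/- Abstract verification lemma: suppose D = (D_t) is an adapted process with D_T = e^{αG_T}, such that e^{−αX^θ_t}D_t is a submartingale for every admissible θ and a martingale for some admissible θ*. Then D_t equals the value process V_t^G = ess inf_θ E[e^{−α(∫ₜᵀ θᵀdS/S − G_T)} | 𝓖̃_t] a.s. for every t, and θ* is optimal. -/
/-!
Write `Z^θ_t = e^{-α X^θ_t} D_t`. Since `D_T = e^{α G_T}`, the terminal value factors as
`Z^θ_T = e^{-α X^θ_t} · e^{-α (X^θ_T - X^θ_t - G_T)}`, and the first factor is bounded and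
`𝓖_t`-measurable, so it pulls out of the conditional expectation:
`E[Z^θ_T | 𝓖_t] = e^{-α X^θ_t} E[e^{-α (X^θ_T - X^θ_t - G_T)} | 𝓖_t]`.
Dividing the submartingale inequality `Z^θ_t ≤ E[Z^θ_T | 𝓖_t]` (resp. the martingale equality
for `θ*`) by the positive factor `e^{-α X^θ_t}` gives the claim.
-/

open MeasureTheory ProbabilityTheory Real

theorem condExp_exp_mul_of_le {Ω : Type*} {m mΩ : MeasurableSpace Ω} {P : Measure Ω}
    [IsFiniteMeasure P] (hm : m ≤ mΩ) {Y H : Ω → ℝ} (hY : StronglyMeasurable[m] Y)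
    {C : ℝ} (hYC : ∀ ω, Y ω ≤ C) (hH : Integrable H P) :
    P[fun ω => exp (Y ω) * H ω|m] =ᵐ[P] fun ω => exp (Y ω) * P[H|m] ω :=
  condExp_stronglyMeasurable_mul_of_bound hm (continuous_exp.comp_stronglyMeasurable hY) hH
    (exp C) (.of_forall fun ω => by
      rw [norm_of_nonneg (exp_pos _).le]
      exact exp_le_exp.2 (hYC ω))

theorem condExp_exp_neg_mul_terminal {Ω : Type*} {m mΩ : MeasurableSpace Ω} {P : Measure Ω}
    [IsFiniteMeasure P] (hm : m ≤ mΩ) (α : ℝ) {G Xt XT DT : Ω → ℝ}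
    (hXt : StronglyMeasurable[m] Xt) {C : ℝ} (hXtC : ∀ ω, |Xt ω| ≤ C)
    (hint : Integrable (fun ω => exp (-(α * (XT ω - Xt ω - G ω)))) P)
    (hDT : DT =ᵐ[P] fun ω => exp (α * G ω)) :
    P[fun ω => exp (-(α * XT ω)) * DT ω|m]
      =ᵐ[P] fun ω => exp (-(α * Xt ω)) * P[fun ω => exp (-(α * (XT ω - Xt ω - G ω)))|m] ω := by
  have hfactor : (fun ω => exp (-(α * XT ω)) * DT ω)
      =ᵐ[P] fun ω => exp (-(α * Xt ω)) * exp (-(α * (XT ω - Xt ω - G ω))) := by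
    filter_upwards [hDT] with ω hω
    rw [hω, ← exp_add, ← exp_add]
    ring_nf
  have hbound : ∀ ω, -(α * Xt ω) ≤ |α| * C := fun ω =>
    calc -(α * Xt ω) ≤ |α * Xt ω| := neg_le_abs _
      _ = |α| * |Xt ω| := abs_mul _ _
      _ ≤ |α| * C := mul_le_mul_of_nonneg_left (hXtC ω) (abs_nonneg _)
  exact (condExp_congr_ae hfactor).trans
    (condExp_exp_mul_of_le hm (stronglyMeasurable_const.mul hXt).neg hbound hint)

theorem stmt16_general {Ω Strat : Type*} {mΩ : MeasurableSpace Ω} (P : Measure Ω)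
    [IsProbabilityMeasure P] (T α : ℝ)
    (𝓖 : ℝ → MeasurableSpace Ω) (h𝓖 : ∀ t, 𝓖 t ≤ mΩ)
    (G : Ω → ℝ)
    (A : Set Strat) (X : Strat → ℝ → Ω → ℝ)
    (hXadapt : ∀ θ ∈ A, ∀ t : ℝ, StronglyMeasurable[𝓖 t] (X θ t))
    (hXbdd : ∀ θ ∈ A, ∀ t : ℝ, ∃ C : ℝ, ∀ ω, |X θ t ω| ≤ C)
    (hXint : ∀ θ ∈ A, ∀ t : ℝ,
      Integrable (fun ω => Real.exp (-(α * (X θ T ω - X θ t ω - G ω)))) P)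
    (D : ℝ → Ω → ℝ)
    (hDT : D T =ᵐ[P] fun ω => Real.exp (α * G ω))
    (hsub : ∀ θ ∈ A, ∀ t ∈ Set.Icc (0:ℝ) T,
      (fun ω => Real.exp (-(α * X θ t ω)) * D t ω)
        ≤ᵐ[P] P[fun ω => Real.exp (-(α * X θ T ω)) * D T ω|𝓖 t])
    (θs : Strat) (hθs : θs ∈ A)
    (hmart : ∀ t ∈ Set.Icc (0:ℝ) T,
      (fun ω => Real.exp (-(α * X θs t ω)) * D t ω)
        =ᵐ[P] P[fun ω => Real.exp (-(α * X θs T ω)) * D T ω|𝓖 t]) :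
    ∀ t ∈ Set.Icc (0:ℝ) T,
      (∀ θ ∈ A,
        D t ≤ᵐ[P] P[fun ω => Real.exp (-(α * (X θ T ω - X θ t ω - G ω)))|𝓖 t]) ∧
        D t =ᵐ[P] P[fun ω => Real.exp (-(α * (X θs T ω - X θs t ω - G ω)))|𝓖 t] := by
  intro t ht
  have hterminal : ∀ θ ∈ A, P[fun ω => exp (-(α * X θ T ω)) * D T ω|𝓖 t]
      =ᵐ[P] fun ω => exp (-(α * X θ t ω)) *
        P[fun ω => exp (-(α * (X θ T ω - X θ t ω - G ω)))|𝓖 t] ω := fun θ hθ => by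
    obtain ⟨C, hC⟩ := hXbdd θ hθ t
    exact condExp_exp_neg_mul_terminal (h𝓖 t) α (hXadapt θ hθ t) hC (hXint θ hθ t) hDT
  refine ⟨fun θ hθ => ?_, ?_⟩
  · filter_upwards [hsub θ hθ t ht, hterminal θ hθ] with ω hle heq
    rw [heq] at hle
    exact le_of_mul_le_mul_left hle (exp_pos _)
  · filter_upwards [hmart t ht, hterminal θs hθs] with ω hmart_ω heq
    rw [heq] at hmart_ω
    exact mul_left_cancel₀ (exp_pos _).ne' hmart_ω

/-- abstract verification lemma: if `D` is adapted with `D_T = e^{αG_T}`,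
`e^{-αX^θ_t}D_t` is a submartingale for every admissible `θ` (hypothesis `hsub`, stated
between each `t` and the terminal time `T`) and a martingale for some admissible `θ*`
(hypothesis `hmart`), then for every `t ∈ [0,T]` the process `D_t` is the value process
`V^G_t = ess inf_θ E[e^{-α(∫ₜᵀ θᵀdS/S − G_T)} | 𝓖̃_t]`: it is an a.s. lower bound for each
conditional payoff (with `∫ₜᵀ θᵀdS/S = X^θ_T − X^θ_t`) and the bound is attained at `θ*`,
so `θ*` is optimal. -/
theorem stmt16 {Ω Strat : Type*} {mΩ : MeasurableSpace Ω} (P : Measure Ω)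
    [IsProbabilityMeasure P] (T α : ℝ) (hT : 0 < T) (hα : 0 < α)
    (𝓖 : ℝ → MeasurableSpace Ω) (h𝓖 : ∀ t, 𝓖 t ≤ mΩ)
    (G : Ω → ℝ) (hG : Integrable (fun ω => Real.exp (α * G ω)) P)
    (A : Set Strat) (X : Strat → ℝ → Ω → ℝ)
    (hXadapt : ∀ θ ∈ A, ∀ t : ℝ, StronglyMeasurable[𝓖 t] (X θ t))
    (hXbdd : ∀ θ ∈ A, ∀ t : ℝ, ∃ C : ℝ, ∀ ω, |X θ t ω| ≤ C)
    (hXint : ∀ θ ∈ A, ∀ t : ℝ,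
      Integrable (fun ω => Real.exp (-(α * (X θ T ω - X θ t ω - G ω)))) P)
    (D : ℝ → Ω → ℝ) (hDadapt : ∀ t, StronglyMeasurable[𝓖 t] (D t))
    (hDT : D T =ᵐ[P] fun ω => Real.exp (α * G ω))
    (hsub : ∀ θ ∈ A, ∀ t ∈ Set.Icc (0:ℝ) T,
      (fun ω => Real.exp (-(α * X θ t ω)) * D t ω)
        ≤ᵐ[P] P[fun ω => Real.exp (-(α * X θ T ω)) * D T ω|𝓖 t])
    (θs : Strat) (hθs : θs ∈ A)
    (hmart : ∀ t ∈ Set.Icc (0:ℝ) T,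
      (fun ω => Real.exp (-(α * X θs t ω)) * D t ω)
        =ᵐ[P] P[fun ω => Real.exp (-(α * X θs T ω)) * D T ω|𝓖 t]) :
    ∀ t ∈ Set.Icc (0:ℝ) T,
      (∀ θ ∈ A,
        D t ≤ᵐ[P] P[fun ω => Real.exp (-(α * (X θ T ω - X θ t ω - G ω)))|𝓖 t]) ∧
        D t =ᵐ[P] P[fun ω => Real.exp (-(α * (X θs T ω - X θs t ω - G ω)))|𝓖 t] :=
  stmt16_general P T α 𝓖 h𝓖 G A X hXadapt hXbdd hXint D hDT hsub θs hθs hmart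
end
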